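/- Let G = GL(3, 𝔽₂) act on the set X of 1-dimensional linear subspaces of 𝔽₂³ and on the set Y of 2-dimensional linear subspaces of 𝔽₂³, in each case by taking images under the linear map. Then there is no map f : X → Y satisfying f(g·W) = g·f(W) for all g ∈ G and all W ∈ X; in particular the two actions are not isomorphic as G-sets. -/

import Mathlib

/-!
An equivariant map must send the point `⟨e₀⟩` to a line `U` fixed by the stabiliser of `⟨e₀⟩`.
This stabiliser contains `rotation`, of order 3, which permutes the three nonzero vectors of
the plane `x₀ = 0` cyclically, and the transvection `shear : e₁ ↦ e₀ + e₁`. Being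
2-dimensional, `U` meets the plane `x₀ = 0` nontrivially, so `rotation`-invariance puts `e₁`
and `e₂` into `U`, then `shear`-invariance puts `e₀` into `U`, and `U` is all of `𝔽₂³`.
-/

abbrev V2 : Type := Fin 3 → ZMod 2

/-- An element of `GL(3, 𝔽₂)` as a linear automorphism of `𝔽₂³`. -/
noncomputable def glLinearEquiv (g : GL (Fin 3) (ZMod 2)) : V2 ≃ₗ[ZMod 2] V2 :=
  LinearMap.GeneralLinearGroup.generalLinearEquiv (ZMod 2) V2
    (Matrix.GeneralLinearGroup.toLin g)

lemma glLinearEquiv_one (x : V2) : glLinearEquiv 1 x = x := by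
  simp [glLinearEquiv]

lemma glLinearEquiv_mul (g h : GL (Fin 3) (ZMod 2)) (x : V2) :
    glLinearEquiv (g * h) x = glLinearEquiv g (glLinearEquiv h x) := by
  have : glLinearEquiv (g * h) = glLinearEquiv g * glLinearEquiv h := by
    simp [glLinearEquiv, map_mul]
  rw [this]
  rfl

/-- The action of `GL(3, 𝔽₂)` on the set of all linear subspaces of `𝔽₂³`,
by taking images under the linear map. -/
noncomputable def subAct : GL (Fin 3) (ZMod 2) →* Equiv.Perm (Submodule (ZMod 2) V2) where
  toFun g := (Submodule.orderIsoMapComap (glLinearEquiv g)).toEquiv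
  map_one' := by
    ext W
    simp [Submodule.orderIsoMapComap, glLinearEquiv_one]
    have h1 : glLinearEquiv 1 = LinearEquiv.refl (ZMod 2) V2 := LinearEquiv.ext glLinearEquiv_one
    simp [h1]
  map_mul' g h := by
    ext W
    simp [Submodule.orderIsoMapComap, glLinearEquiv_mul]
    have h2 : glLinearEquiv (g * h) = (glLinearEquiv h).trans (glLinearEquiv g) :=
      LinearEquiv.ext (glLinearEquiv_mul g h)
    simp [h2]

lemma subAct_finrank (g : GL (Fin 3) (ZMod 2)) (W : Submodule (ZMod 2) V2) :
    Module.finrank (ZMod 2) (subAct g W) = Module.finrank (ZMod 2) W := by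
  have h : subAct g W = W.map ((glLinearEquiv g) : V2 →ₗ[ZMod 2] V2) := by
    ext x
    simp only [subAct, Submodule.orderIsoMapComap, MonoidHom.coe_mk, OneHom.coe_mk,
      RelIso.coe_fn_toEquiv, Submodule.mem_map, LinearEquiv.coe_coe]
    rfl
  rw [h, LinearEquiv.finrank_map_eq]

/-- The action of `GL(3, 𝔽₂)` on the set of `r`-dimensional linear subspaces of `𝔽₂³`,
by taking images under the linear map. -/
noncomputable def fanoRep (r : ℕ) :
    GL (Fin 3) (ZMod 2) →*
      Equiv.Perm {W : Submodule (ZMod 2) V2 // Module.finrank (ZMod 2) W = r} where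
  toFun g := (subAct g).subtypePerm (fun W => by rw [subAct_finrank])
  map_one' := by
    ext W
    simp [Equiv.Perm.subtypePerm_apply]
  map_mul' g h := by
    ext W
    simp [Equiv.Perm.subtypePerm_apply]
    exact Iff.rfl

open Module
open scoped Matrix

theorem Submodule.exists_ne_zero_mem_ker_of_one_lt_finrank {K V : Type*} [Field K]
    [AddCommGroup V] [Module K V] (U : Submodule K V) [FiniteDimensional K U] (φ : V →ₗ[K] K)
    (hU : 1 < finrank K U) : ∃ w ∈ U, w ≠ 0 ∧ φ w = 0 := by
  obtain ⟨w, hw, hw0⟩ := Submodule.ne_bot_iff _ |>.mp <|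
    (φ.domRestrict U).ker_ne_bot_of_finrank_lt (by rwa [finrank_self])
  exact ⟨w, w.2, by simpa using hw0, hw⟩

theorem Submodule.eq_top_of_forall_single_mem {R η : Type*} [Semiring R] [Finite η]
    [DecidableEq η] {U : Submodule R (η → R)} (h : ∀ i, Pi.single i 1 ∈ U) : U = ⊤ := by
  rw [eq_top_iff, ← (Pi.basisFun R η).span_eq, Submodule.span_le]
  rintro _ ⟨i, rfl⟩
  simpa using h i

theorem equivariant_apply_eq_of_apply_eq {G α β : Type*} [Monoid G] {ρ : G →* Equiv.Perm α}
    {σ : G →* Equiv.Perm β} {f : α → β} (hf : ∀ g x, f (ρ g x) = σ g (f x)) {g : G} {x : α}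
    (hx : ρ g x = x) : σ g (f x) = f x := by
  rw [← hf, hx]

theorem subAct_apply (g : GL (Fin 3) (ZMod 2)) (W : Submodule (ZMod 2) V2) :
    subAct g W = W.map (Matrix.mulVecLin (g : Matrix (Fin 3) (Fin 3) (ZMod 2))) :=
  rfl

theorem subAct_span_singleton {g : GL (Fin 3) (ZMod 2)} {v : V2}
    (h : (g : Matrix (Fin 3) (Fin 3) (ZMod 2)) *ᵥ v = v) :
    subAct g (Submodule.span (ZMod 2) {v}) = Submodule.span (ZMod 2) {v} := by
  rw [subAct_apply, Submodule.map_span, Set.image_singleton, Matrix.mulVecLin_apply, h]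

theorem mulVec_mem_of_subAct_eq {g : GL (Fin 3) (ZMod 2)} {U : Submodule (ZMod 2) V2}
    (h : subAct g U = U) {x : V2} (hx : x ∈ U) : (g : Matrix (Fin 3) (Fin 3) (ZMod 2)) *ᵥ x ∈ U := by
  rw [← h, subAct_apply]
  exact Submodule.mem_map_of_mem hx

namespace Fano

def shear : GL (Fin 3) (ZMod 2) :=
  ⟨!![1, 1, 0; 0, 1, 0; 0, 0, 1], !![1, 1, 0; 0, 1, 0; 0, 0, 1], by decide, by decide⟩

def rotation : GL (Fin 3) (ZMod 2) :=
  ⟨!![1, 0, 0; 0, 0, 1; 0, 1, 1], !![1, 0, 0; 0, 1, 1; 0, 1, 0], by decide, by decide⟩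

theorem mem_orbit_rotation_of_apply_zero_eq_zero :
    ∀ (i : Fin 3) (w : V2), i ≠ 0 → w ≠ 0 → w 0 = 0 →
      Pi.single i 1 = w ∨ Pi.single i 1 = (rotation : Matrix (Fin 3) (Fin 3) (ZMod 2)) *ᵥ w ∨
        Pi.single i 1 = (rotation : Matrix (Fin 3) (Fin 3) (ZMod 2)) *ᵥ
          ((rotation : Matrix (Fin 3) (Fin 3) (ZMod 2)) *ᵥ w) := by
  decide

theorem single_mem_of_rotation_invariant {U : Submodule (ZMod 2) V2}
    (hU : subAct rotation U = U) {w : V2} (hw : w ∈ U) (hw0 : w ≠ 0) (hw_zero : w 0 = 0)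
    {i : Fin 3} (hi : i ≠ 0) : Pi.single i 1 ∈ U := by
  have hrw := mulVec_mem_of_subAct_eq hU hw
  rcases mem_orbit_rotation_of_apply_zero_eq_zero i w hi hw0 hw_zero with h | h | h <;> rw [h]
  exacts [hw, hrw, mulVec_mem_of_subAct_eq hU hrw]

theorem finrank_ne_two_of_invariant {U : Submodule (ZMod 2) V2}
    (h_shear : subAct shear U = U) (h_rotation : subAct rotation U = U) :
    finrank (ZMod 2) U ≠ 2 := by
  intro hU
  obtain ⟨w, hw, hw0, hw_zero⟩ :=
    U.exists_ne_zero_mem_ker_of_one_lt_finrank (LinearMap.proj 0) (by omega)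
  have h₁ := single_mem_of_rotation_invariant h_rotation hw hw0 hw_zero (i := 1) (by decide)
  have h₂ := single_mem_of_rotation_invariant h_rotation hw hw0 hw_zero (i := 2) (by decide)
  have h₀ : Pi.single 0 1 ∈ U := by
    have : Pi.single (0 : Fin 3) (1 : ZMod 2) =
        (shear : Matrix (Fin 3) (Fin 3) (ZMod 2)) *ᵥ Pi.single 1 1 + Pi.single 1 1 := by
      decide
    rw [this]
    exact U.add_mem (mulVec_mem_of_subAct_eq h_shear h₁) h₁
  have htop : U = ⊤ := Submodule.eq_top_of_forall_single_mem fun i => by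
    fin_cases i
    exacts [h₀, h₁, h₂]
  rw [htop, finrank_top, finrank_fin_fun] at hU
  omega

theorem not_equivariant
    (f : {W : Submodule (ZMod 2) V2 // finrank (ZMod 2) W = 1} →
      {U : Submodule (ZMod 2) V2 // finrank (ZMod 2) U = 2}) :
    ¬ ∀ (g : GL (Fin 3) (ZMod 2)) (W : _), f (fanoRep 1 g W) = fanoRep 2 g (f W) := by
  intro hf
  let W₀ : {W : Submodule (ZMod 2) V2 // finrank (ZMod 2) W = 1} :=
    ⟨Submodule.span (ZMod 2) {Pi.single 0 1}, finrank_span_singleton (by decide)⟩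
  have invariant (g : GL (Fin 3) (ZMod 2))
      (hg : (g : Matrix (Fin 3) (Fin 3) (ZMod 2)) *ᵥ Pi.single 0 1 = Pi.single 0 1) :
      subAct g (f W₀).1 = (f W₀).1 :=
    congrArg Subtype.val <|
      equivariant_apply_eq_of_apply_eq hf (x := W₀) (Subtype.ext (subAct_span_singleton hg))
  exact finrank_ne_two_of_invariant (invariant shear (by decide))
    (invariant rotation (by decide)) (f W₀).2

end Fano

/-- There is no `GL(3, 𝔽₂)`-equivariant map from the set `X` of 1-dimensional subspaces of
`𝔽₂³` (points of the Fano plane) to the set `Y` of 2-dimensional subspaces (lines of the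
Fano plane); in particular, the two actions are not isomorphic as `G`-sets. -/
theorem fano_points_lines_no_equivariant_map :
    (¬ ∃ f : {W : Submodule (ZMod 2) V2 // Module.finrank (ZMod 2) W = 1} →
             {U : Submodule (ZMod 2) V2 // Module.finrank (ZMod 2) U = 2},
        ∀ (g : GL (Fin 3) (ZMod 2)) (W : _), f (fanoRep 1 g W) = fanoRep 2 g (f W)) ∧
    (¬ ∃ f : {W : Submodule (ZMod 2) V2 // Module.finrank (ZMod 2) W = 1} →
             {U : Submodule (ZMod 2) V2 // Module.finrank (ZMod 2) U = 2},
        Function.Bijective f ∧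
          ∀ (g : GL (Fin 3) (ZMod 2)) (W : _), f (fanoRep 1 g W) = fanoRep 2 g (f W)) :=
  ⟨fun ⟨f, hf⟩ => Fano.not_equivariant f hf, fun ⟨f, _, hf⟩ => Fano.not_equivariant f hf⟩
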